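/- Under the single functional dependency setting, the disjunctive database of all transversal-disjunctions of clusters (one fact from each cluster of a clique) equals its own reduction (no disjunction properly contains another), provided every clique has at least two clusters or handle singleton cliques as singleton disjunctions; hence it is the canonical disjunctive database representing the repairs. -/

import Mathlib

variable {F : Type*} [DecidableEq F]

/-- M is a model of the disjunctive database D: it meets every disjunction. -/
def IsModel (D : Finset (Finset F)) (M : Finset F) : Prop :=
  ∀ d ∈ D, ∃ t ∈ d, t ∈ M

/-- M is a minimal model of D. -/
def IsMinModel (D : Finset (Finset F)) (M : Finset F) : Prop :=
  IsModel D M ∧ ∀ M' ⊂ M, ¬ IsModel D M'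

/-- reduction removes every disjunction properly containing another disjunction of D. -/
def reduction (D : Finset (Finset F)) : Finset (Finset F) :=
  D.filter (fun d => ∀ d' ∈ D, ¬ d' ⊂ d)

/-!
A set of facts is a model of the transversal disjunctions exactly when it contains a whole cluster
of every clique, so the minimal models are the repairs: one cluster chosen per clique. Since the
clusters are pairwise disjoint, a transversal `d` meets the repair that picks, in the clique of `d`,
the cluster of a given fact `t ∈ d` only in `t`. Any disjunction `d' ⊆ d` that every repair satisfies
therefore contains every `t ∈ d`; this gives both irreducibility and, since a database with the same
minimal models has the same models and so a disjunction inside each transversal, canonicity.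
-/

open Finset

omit [DecidableEq F] in
lemma IsModel.mono {D : Finset (Finset F)} {M M' : Finset F} (hM : IsModel D M) (h : M ⊆ M') :
    IsModel D M' := fun d hd =>
  let ⟨t, htd, htM⟩ := hM d hd
  ⟨t, htd, h htM⟩

omit [DecidableEq F] in
lemma IsModel.exists_isMinModel_subset {D : Finset (Finset F)} {M : Finset F}
    (hM : IsModel D M) : ∃ M₀ ⊆ M, IsMinModel D M₀ := by
  induction M using Finset.strongInduction with
  | H M ih =>
    by_cases hmin : ∀ M' ⊂ M, ¬ IsModel D M'
    · exact ⟨M, subset_rfl, hM, hmin⟩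
    · push Not at hmin
      obtain ⟨M', hM'M, hM'⟩ := hmin
      obtain ⟨M₀, hM₀, hmin₀⟩ := ih M' hM'M hM'
      exact ⟨M₀, hM₀.trans hM'M.subset, hmin₀⟩

omit [DecidableEq F] in
lemma isModel_of_isMinModel_imp {D D' : Finset (Finset F)}
    (h : ∀ M, IsMinModel D' M → IsMinModel D M) {M : Finset F} (hM : IsModel D' M) :
    IsModel D M :=
  let ⟨_, hM₀M, hM₀⟩ := hM.exists_isMinModel_subset
  (h _ hM₀).1.mono hM₀M

lemma exists_subset_of_isModel_imp {D D' : Finset (Finset F)}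
    (h : ∀ M, IsModel D' M → IsModel D M) {d : Finset F} (hd : d ∈ D) : ∃ d' ∈ D', d' ⊆ d := by
  by_contra! hnot
  -- every disjunction of `D'` has a fact outside `d`; together they form a model of `D'` missing `d`
  have hM : IsModel D' (D'.biUnion (· \ d)) := fun d' hd' =>
    let ⟨t, htd', htd⟩ := not_subset.mp (hnot d' hd')
    ⟨t, htd', mem_biUnion.mpr ⟨d', hd', mem_sdiff.mpr ⟨htd', htd⟩⟩⟩
  obtain ⟨t, htd, htM⟩ := h _ hM d hd
  obtain ⟨d', -, ht⟩ := mem_biUnion.mp htM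
  exact (mem_sdiff.mp ht).2 htd

lemma isMinModel_iff_of_isModel_iff {D : Finset (Finset F)} {R : Set (Finset F)}
    (hR : ∀ M, IsModel D M ↔ ∃ r ∈ R, r ⊆ M) (hanti : IsAntichain (· ⊆ ·) R) (M : Finset F) :
    IsMinModel D M ↔ M ∈ R := by
  constructor
  · rintro ⟨hM, hmin⟩
    obtain ⟨r, hr, hrM⟩ := (hR M).mp hM
    obtain rfl : r = M := by
      by_contra hne
      exact hmin r (ssubset_of_subset_of_ne hrM hne) ((hR r).mpr ⟨r, hr, subset_rfl⟩)
    exact hr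
  · intro hM
    refine ⟨(hR M).mpr ⟨M, hM, subset_rfl⟩, fun M' hM'M hM' => ?_⟩
    obtain ⟨r, hr, hrM'⟩ := (hR M').mp hM'
    have hrM : r ⊂ M := lt_of_le_of_lt hrM' hM'M
    exact hanti hr hM hrM.ne hrM.subset

def IsIrredundant (D : Finset (Finset F)) (d : Finset F) : Prop :=
  ∀ t ∈ d, ∃ M, IsModel D M ∧ M ∩ d ⊆ {t}

lemma IsIrredundant.subset_of_subset {D : Finset (Finset F)} {d d' : Finset F}
    (hd : IsIrredundant D d) (hd' : d' ∈ D) (hsub : d' ⊆ d) : d ⊆ d' := by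
  intro t ht
  obtain ⟨M, hM, hMd⟩ := hd t ht
  obtain ⟨s, hsd', hsM⟩ := hM d' hd'
  obtain rfl : s = t := mem_singleton.mp (hMd (mem_inter.mpr ⟨hsM, hsub hsd'⟩))
  exact hsd'

lemma reduction_eq_self {D : Finset (Finset F)} (h : ∀ d ∈ D, IsIrredundant D d) :
    reduction D = D :=
  filter_eq_self.mpr fun d hd _ hd' hd'd =>
    hd'd.not_subset ((h d hd).subset_of_subset hd' hd'd.subset)

omit [DecidableEq F] in
lemma sigma_eq_of_mem_of_mem {κ : Type*} {β : κ → Type*} {G : (i : κ) → β i → Finset F}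
    (hdisj : Pairwise fun p q : Σ i, β i => Disjoint (G p.1 p.2) (G q.1 q.2))
    {i i' : κ} {j : β i} {j' : β i'} {t : F} (ht : t ∈ G i j) (ht' : t ∈ G i' j') :
    (⟨i, j⟩ : Σ i, β i) = ⟨i', j'⟩ := by
  by_contra hne
  exact disjoint_left.mp (hdisj hne) ht ht'

section Clusters

variable {κ : Type*} [Fintype κ] {β : κ → Type*} [∀ i, Fintype (β i)]
  {G : (i : κ) → β i → Finset F}

def repair (G : (i : κ) → β i → Finset F) (j : (i : κ) → β i) : Finset F :=
  univ.biUnion fun i => G i (j i)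

lemma isModel_iff_exists_repair_subset {D : Finset (Finset F)}
    (hD : ∀ d, d ∈ D ↔ ∃ (i : κ) (g : β i → F), (∀ j, g j ∈ G i j) ∧ d = univ.image g)
    (M : Finset F) : IsModel D M ↔ ∃ j, repair G j ⊆ M := by
  simp only [repair, biUnion_subset, mem_univ, true_implies]
  constructor
  · intro hM
    suffices h : ∀ i, ∃ j, G i j ⊆ M by
      choose j hj using h
      exact ⟨j, hj⟩
    intro i
    by_contra! hout
    choose t htG htM using fun j => not_subset.mp (hout j)
    obtain ⟨s, hs, hsM⟩ := hM _ ((hD _).mpr ⟨i, t, htG, rfl⟩)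
    obtain ⟨j, -, rfl⟩ := mem_image.mp hs
    exact htM j hsM
  · rintro ⟨j, hj⟩ d hd
    obtain ⟨i, g, hg, rfl⟩ := (hD d).mp hd
    exact ⟨g (j i), mem_image_of_mem g (mem_univ _), hj i (hg _)⟩

omit [∀ i, Fintype (β i)] in
lemma eq_of_repair_subset (hne : ∀ i j, (G i j).Nonempty)
    (hdisj : Pairwise fun p q : Σ i, β i => Disjoint (G p.1 p.2) (G q.1 q.2))
    {j j' : (i : κ) → β i} (h : repair G j ⊆ repair G j') : j = j' := by
  funext i
  obtain ⟨t, ht⟩ := hne i (j i)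
  obtain ⟨i', -, ht'⟩ := mem_biUnion.mp (h (mem_biUnion.mpr ⟨i, mem_univ _, ht⟩))
  obtain ⟨rfl, hj⟩ := Sigma.mk.inj_iff.mp (sigma_eq_of_mem_of_mem hdisj ht ht')
  exact eq_of_heq hj

lemma isMinModel_iff_exists_eq_repair {D : Finset (Finset F)} (hne : ∀ i j, (G i j).Nonempty)
    (hdisj : Pairwise fun p q : Σ i, β i => Disjoint (G p.1 p.2) (G q.1 q.2))
    (hD : ∀ d, d ∈ D ↔ ∃ (i : κ) (g : β i → F), (∀ j, g j ∈ G i j) ∧ d = univ.image g)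
    (M : Finset F) : IsMinModel D M ↔ ∃ j, M = repair G j := by
  have hanti : IsAntichain (· ⊆ ·) (Set.range (repair G)) := by
    rintro _ ⟨j, rfl⟩ _ ⟨j', rfl⟩ hjj' h
    exact hjj' (congrArg _ (eq_of_repair_subset hne hdisj h))
  have hmodel (M : Finset F) : IsModel D M ↔ ∃ r ∈ Set.range (repair G), r ⊆ M := by
    rw [Set.exists_range_iff]
    exact isModel_iff_exists_repair_subset hD M
  rw [isMinModel_iff_of_isModel_iff hmodel hanti M]
  simp only [Set.mem_range, eq_comm]

lemma isIrredundant_image {D : Finset (Finset F)} (hβ : ∀ i, Nonempty (β i))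
    (hdisj : Pairwise fun p q : Σ i, β i => Disjoint (G p.1 p.2) (G q.1 q.2))
    (hrepair : ∀ j, IsModel D (repair G j)) {i : κ} {g : β i → F} (hg : ∀ j, g j ∈ G i j) :
    IsIrredundant D (univ.image g) := by
  classical
  intro t ht
  obtain ⟨j₀, -, rfl⟩ := mem_image.mp ht
  let J := Function.update (fun i => (hβ i).some) i j₀
  refine ⟨repair G J, hrepair J, fun s hs => ?_⟩
  obtain ⟨hsJ, hsg⟩ := mem_inter.mp hs
  obtain ⟨j₁, -, rfl⟩ := mem_image.mp hsg
  obtain ⟨i', -, hi'⟩ := mem_biUnion.mp hsJ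
  obtain ⟨rfl, hj⟩ := Sigma.mk.inj_iff.mp (sigma_eq_of_mem_of_mem hdisj (hg j₁) hi')
  simp [eq_of_heq hj, J]

end Clusters

theorem stmt10 (n : ℕ) (m : Fin n → ℕ) (hm : ∀ i, 0 < m i)
    (G : (i : Fin n) → Fin (m i) → Finset F)
    (hne : ∀ i j, (G i j).Nonempty)
    (hdisj : ∀ p q : Σ i : Fin n, Fin (m i), p ≠ q → Disjoint (G p.1 p.2) (G q.1 q.2))
    (D : Finset (Finset F))
    (hD : ∀ d : Finset F, d ∈ D ↔
      ∃ (i : Fin n) (g : Fin (m i) → F), (∀ j, g j ∈ G i j) ∧ d = Finset.univ.image g) :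
    reduction D = D
    ∧ (∀ M : Finset F, IsMinModel D M
        ↔ ∃ j : (i : Fin n) → Fin (m i), M = Finset.univ.biUnion (fun i => G i (j i)))
    ∧ (∀ D' : Finset (Finset F), (∀ d ∈ D', d.Nonempty) →
        (∀ M : Finset F, IsMinModel D' M ↔ IsMinModel D M) → D ⊆ D') := by
  have hdisj' : Pairwise fun p q : Σ i, Fin (m i) => Disjoint (G p.1 p.2) (G q.1 q.2) :=
    fun p q => hdisj p q
  have hβ : ∀ i, Nonempty (Fin (m i)) := fun i => ⟨⟨0, hm i⟩⟩
  have hmin := isMinModel_iff_exists_eq_repair hne hdisj' hD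
  have hrepair : ∀ j, IsMinModel D (repair G j) := fun j => (hmin _).mpr ⟨j, rfl⟩
  refine ⟨reduction_eq_self fun d hd => ?_, hmin, fun D' _ hiff d hd => ?_⟩
  · obtain ⟨i, g, hg, rfl⟩ := (hD d).mp hd
    exact isIrredundant_image hβ hdisj' (fun j => (hrepair j).1) hg
  · obtain ⟨d', hd', hd'd⟩ :=
      exists_subset_of_isModel_imp (fun _ => isModel_of_isMinModel_imp fun M => (hiff M).mp) hd
    obtain ⟨i, g, hg, rfl⟩ := (hD _).mp hd
    have hirr := isIrredundant_image hβ hdisj' (fun j => ((hiff _).mpr (hrepair j)).1) hg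
    rwa [← subset_antisymm hd'd (hirr.subset_of_subset hd' hd'd)]
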